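/- arXiv:2301.09847 — 5 statements merged into one kernel-verified Lean document; each statement's English description precedes it below -/
import Mathlib

section
/- Let T = (ℝ/ℤ)² be the 2-torus (written additively) and let A, B : T → T be the group automorphisms induced by the integer matrices A = [[0,-1],[1,0]] (of order 4) and B = [[0,-1],[1,1]] (of order 6) acting linearly on ℝ². If K is a compact Hausdorff topological group, f : T → K is a continuous group homomorphism, and u, v ∈ K satisfy u·f(x)·u⁻¹ = f(A x) and v·f(x)·v⁻¹ = f(B x) for all x ∈ T, then f is the trivial homomorphism (f(x) = 1 for all x ∈ T). -/
/-- The 2-torus `(ℝ/ℤ)²`. -/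
abbrev Torus2 : Type := AddCircle (1 : ℝ) × AddCircle (1 : ℝ)

/-- The automorphism of the 2-torus induced by the integer matrix `[[0,-1],[1,0]]`
(of order 4) acting linearly on `ℝ²`. -/
noncomputable def torusAutA (p : Torus2) : Torus2 := (-p.2, p.1)

/-- The automorphism of the 2-torus induced by the integer matrix `[[0,-1],[1,1]]`
(of order 6) acting linearly on `ℝ²`. -/
noncomputable def torusAutB (p : Torus2) : Torus2 := (-p.2, p.1 + p.2)

/-!
The word `u v u v v` implements, by conjugation, the hyperbolic automorphism `M = A B A B B`
with matrix `[[2,1],[1,1]]`. Its powers contract the eigenline `ℝ (ψ, 1)` (eigenvalue `ψ ^ 2`), and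
the powers of its inverse contract the eigenline `ℝ (φ, 1)`. If `c ^ n f(x) c ^ (-n) → 1`, a
cluster point `k` of `c ^ n` in the compact group `K` satisfies `k f(x) k⁻¹ = 1`, so `f` is trivial
on both eigenlines, which span `ℝ²`.
-/

open Filter Topology Real
open scoped goldenRatio

def ConjImplements {G K : Type*} [Group K] (c : K) (f : G → K) (σ : G → G) : Prop :=
  ∀ x, c * f x * c⁻¹ = f (σ x)

namespace ConjImplements

variable {G K : Type*} [Group K] {f : G → K} {c d : K} {σ τ : G → G}

theorem mul (hc : ConjImplements c f σ) (hd : ConjImplements d f τ) :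
    ConjImplements (c * d) f (σ ∘ τ) := fun x => by
  rw [Function.comp_apply, ← hc, ← hd]
  group

theorem inv (hc : ConjImplements c f σ) (hτ : Function.RightInverse τ σ) :
    ConjImplements c⁻¹ f τ := fun x => by
  rw [← hτ x, ← hc, hτ x]
  group

theorem pow (hc : ConjImplements c f σ) (n : ℕ) : ConjImplements (c ^ n) f σ^[n] := by
  induction n with
  | zero => simp [ConjImplements]
  | succ n ih => rw [pow_succ, Function.iterate_succ]; exact ih.mul hc

theorem comp_semiconj {X : Type*} {ℓ : X → G} {T : X → X} (hc : ConjImplements c f σ)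
    (hℓ : Function.Semiconj ℓ T σ) : ConjImplements c (f ∘ ℓ) T := fun x => by
  simp only [Function.comp_apply, hc (ℓ x), hℓ x]

end ConjImplements

section CompactGroup

variable {K : Type*} [Group K] [TopologicalSpace K] [IsTopologicalGroup K] [CompactSpace K]
  [T2Space K]

theorem eq_one_of_tendsto_conj {a : K} (c : ℕ → K)
    (h : Tendsto (fun n => c n * a * (c n)⁻¹) atTop (𝓝 1)) : a = 1 := by
  obtain ⟨k, hk⟩ := exists_clusterPt_of_compactSpace (map c atTop)
  have hconj : ContinuousAt (fun x : K => x * a * x⁻¹) k := by fun_prop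
  have hk1 : k * a * k⁻¹ = 1 := eq_of_nhds_neBot (hk.map hconj (tendsto_map'_iff.mpr h))
  exact mul_eq_left.mp (mul_inv_eq_one.mp hk1)

theorem ConjImplements.eq_one_of_tendsto_iterate {X : Type*} [TopologicalSpace X] {F : X → K}
    {c : K} {T : X → X} (hc : ConjImplements c F T) (hF : Continuous F) {x₀ : X}
    (hx₀ : F x₀ = 1) (hT : ∀ x, Tendsto (fun n => T^[n] x) atTop (𝓝 x₀)) (x : X) : F x = 1 := by
  have hFT := (hF.tendsto x₀).comp (hT x)
  rw [hx₀] at hFT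
  exact eq_one_of_tendsto_conj (fun n => c ^ n) (hFT.congr fun n => (hc.pow n x).symm)

theorem ConjImplements.eq_one_of_semiconj_mul_left {G : Type*} [TopologicalSpace G]
    {f : G → K} {c : K} {σ : G → G} (hc : ConjImplements c f σ) (hf : Continuous f)
    {ℓ : ℝ → G} (hℓ : Continuous ℓ) (hℓ₀ : f (ℓ 0) = 1) {r : ℝ} (hr : |r| < 1)
    (hσ : Function.Semiconj ℓ (r * ·) σ) (s : ℝ) : f (ℓ s) = 1 := by
  refine (hc.comp_semiconj hσ).eq_one_of_tendsto_iterate (hf.comp hℓ) hℓ₀ (fun s => ?_) s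
  simpa [mul_left_iterate_apply] using
    (tendsto_pow_atTop_nhds_zero_of_abs_lt_one hr).mul_const s

end CompactGroup

theorem abs_goldenConj_sq_lt_one : |ψ ^ 2| < 1 := by
  rw [goldenConj_sq, abs_lt]
  constructor <;> linarith [goldenConj_neg, neg_one_lt_goldenConj]

theorem exists_smul_goldenConj_add_smul_goldenRatio (p : ℝ × ℝ) :
    ∃ s t : ℝ, s • (ψ, (1 : ℝ)) + t • (φ, (1 : ℝ)) = p := by
  have h5 : √5 ≠ 0 := by positivity
  refine ⟨p.2 - (p.1 - ψ * p.2) / √5, (p.1 - ψ * p.2) / √5, Prod.ext ?_ ?_⟩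
  · simp only [Prod.fst_add, Prod.smul_fst, smul_eq_mul]
    rw [← goldenRatio_sub_goldenConj]
    field_simp
    ring
  · simp

def torusMk : ℝ × ℝ →+ Torus2 :=
  (QuotientAddGroup.mk' _).prodMap (QuotientAddGroup.mk' _)

theorem torusMk_apply (p : ℝ × ℝ) :
    torusMk p = ((p.1 : AddCircle (1 : ℝ)), (p.2 : AddCircle (1 : ℝ))) := rfl

theorem continuous_torusMk : Continuous torusMk :=
  (AddCircle.continuous_mk' 1).prodMap (AddCircle.continuous_mk' 1)

theorem torusMk_surjective : Function.Surjective torusMk :=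
  QuotientAddGroup.mk_surjective.prodMap QuotientAddGroup.mk_surjective

/-- The automorphism induced by `[[2,1],[1,1]]`, with eigenvectors `(ψ, 1)` and `(φ, 1)` for the
eigenvalues `ψ ^ 2` and `φ ^ 2`. -/
def torusAutM (p : Torus2) : Torus2 := (p.1 + p.1 + p.2, p.1 + p.2)

def torusAutMInv (p : Torus2) : Torus2 := (p.1 - p.2, p.2 + p.2 - p.1)

theorem torusAutM_eq_comp :
    torusAutA ∘ torusAutB ∘ torusAutA ∘ torusAutB ∘ torusAutB = torusAutM := by
  funext p
  simp only [Function.comp_apply, torusAutA, torusAutB, torusAutM, Prod.mk.injEq]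
  constructor <;> abel

theorem rightInverse_torusAutMInv : Function.RightInverse torusAutMInv torusAutM := fun p => by
  simp only [torusAutM, torusAutMInv, Prod.ext_iff]
  constructor <;> abel

theorem semiconj_torusAutM_goldenConj :
    Function.Semiconj (fun s : ℝ => torusMk (s • (ψ, 1))) (ψ ^ 2 * ·) torusAutM := fun s => by
  simp only [torusAutM, torusMk_apply, Prod.smul_mk, smul_eq_mul, mul_one, ← AddCircle.coe_add]
  congr 2
  · linear_combination (s * (1 + ψ)) * goldenConj_sq
  · linear_combination s * goldenConj_sq

theorem semiconj_torusAutMInv_goldenRatio :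
    Function.Semiconj (fun s : ℝ => torusMk (s • (φ, 1))) (ψ ^ 2 * ·) torusAutMInv := fun s => by
  simp only [torusAutMInv, torusMk_apply, Prod.smul_mk, smul_eq_mul, mul_one, ← AddCircle.coe_add,
    ← AddCircle.coe_sub]
  congr 2
  · linear_combination (s * φ) * goldenConj_sq + s * goldenConj_mul_goldenRatio
  · linear_combination s * goldenConj_sq + s * goldenRatio_add_goldenConj

/-- If a continuous homomorphism `f` from the 2-torus to a compact group `K` is such that
the automorphisms induced by `[[0,-1],[1,0]]` and `[[0,-1],[1,1]]` are implemented by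
conjugation by elements `u, v ∈ K`, then `f` is trivial. -/
theorem torus_hom_trivial_of_conjugation_implements_SL2
    {K : Type*} [Group K] [TopologicalSpace K] [IsTopologicalGroup K]
    [CompactSpace K] [T2Space K]
    (f : Torus2 → K) (hfc : Continuous f)
    (hf : ∀ x y : Torus2, f (x + y) = f x * f y)
    (u v : K)
    (hu : ∀ x : Torus2, u * f x * u⁻¹ = f (torusAutA x))
    (hv : ∀ x : Torus2, v * f x * v⁻¹ = f (torusAutB x)) :
    ∀ x : Torus2, f x = 1 := by
  have hf₀ : f 0 = 1 := by simpa using (hf 0 0).symm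
  have hA : ConjImplements u f torusAutA := hu
  have hB : ConjImplements v f torusAutB := hv
  have hM : ConjImplements (u * v * u * v * v) f torusAutM :=
    torusAutM_eq_comp ▸ (((hA.mul hB).mul hA).mul hB).mul hB
  have hline₀ (w : ℝ × ℝ) : f (torusMk ((0 : ℝ) • w)) = 1 := by rw [zero_smul, map_zero, hf₀]
  have hline (w : ℝ × ℝ) : Continuous fun s : ℝ => torusMk (s • w) :=
    continuous_torusMk.comp (continuous_id.smul continuous_const)
  have hstable := hM.eq_one_of_semiconj_mul_left hfc (hline _) (hline₀ _)
    abs_goldenConj_sq_lt_one semiconj_torusAutM_goldenConj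
  have hunstable := (hM.inv rightInverse_torusAutMInv).eq_one_of_semiconj_mul_left hfc (hline _)
    (hline₀ _) abs_goldenConj_sq_lt_one semiconj_torusAutMInv_goldenRatio
  intro x
  obtain ⟨p, rfl⟩ := torusMk_surjective x
  obtain ⟨s, t, rfl⟩ := exists_smul_goldenConj_add_smul_goldenRatio p
  rw [map_add, hf, hstable, hunstable, one_mul]
end

section
/- Let C be a category with pushouts in which every monomorphism is regular (i.e., is an equalizer of some pair of morphisms). Let ι₀ : H → G₀ and ι₁ : H → G₁ be monomorphisms such that there exist monomorphisms j₀ : G₀ → G and j₁ : G₁ → G with j₀ ∘ ι₀ = j₁ ∘ ι₁. Then the pushout square of ι₀ and ι₁ (with vertex G₀ ∐_H G₁ and its two structure maps) is also a pullback square. -/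
/-!
Write `ι₀ ≫ j₀ : H ⟶ G` as the equalizer of `u v : G ⟶ Z`. Since `ι₀ ≫ j₀ ≫ v = ι₁ ≫ j₁ ≫ u`,
both `(j₀ ≫ u, j₁ ≫ u)` and `(j₀ ≫ v, j₁ ≫ u)` are cocones on the span and so factor through
the pushout. Hence for every square `x₀ ≫ inl = x₁ ≫ inr` the map `x₀ ≫ j₀` equalizes `u` and `v`,
so it factors through `H`; cancelling the monos `j₀` and `j₁` shows that this factorization
lifts `(x₀, x₁)`.
-/

open CategoryTheory CategoryTheory.Limits

namespace CategoryTheory.IsPushout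

variable {C : Type*} [Category C] {H G₀ G₁ P : C} {ι₀ : H ⟶ G₀} {ι₁ : H ⟶ G₁}
  {i₀ : G₀ ⟶ P} {i₁ : G₁ ⟶ P}

lemma comp_eq_comp_of_comp_eq (sq : IsPushout ι₀ ι₁ i₀ i₁) {T G : C} {a₀ : T ⟶ G₀}
    {a₁ : T ⟶ G₁} (ha : a₀ ≫ i₀ = a₁ ≫ i₁) {j₀ : G₀ ⟶ G} {j₁ : G₁ ⟶ G}
    (hj : ι₀ ≫ j₀ = ι₁ ≫ j₁) : a₀ ≫ j₀ = a₁ ≫ j₁ := by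
  simpa using ha =≫ sq.desc j₀ j₁ hj

lemma isPullback_of_isRegularMono_comp (sq : IsPushout ι₀ ι₁ i₀ i₁) {G : C} {j₀ : G₀ ⟶ G}
    {j₁ : G₁ ⟶ G} [Mono j₀] [Mono j₁] (hj : ι₀ ≫ j₀ = ι₁ ≫ j₁) [IsRegularMono (ι₀ ≫ j₀)] :
    IsPullback ι₀ ι₁ i₀ i₁ := by
  have : Mono ι₀ := mono_of_mono ι₀ j₀
  refine .mk' sq.w (fun _ _ _ h _ ↦ by rwa [cancel_mono] at h) fun T a₀ a₁ ha ↦ ?_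
  set m := ι₀ ≫ j₀
  have hsq : a₀ ≫ j₀ = a₁ ≫ j₁ := sq.comp_eq_comp_of_comp_eq ha hj
  have hcocone : ι₀ ≫ j₀ ≫ IsRegularMono.right m = ι₁ ≫ j₁ ≫ IsRegularMono.left m := by
    rw [← Category.assoc, ← Category.assoc, ← hj]
    exact (IsRegularMono.w m).symm
  have hequalizes :
      (a₀ ≫ j₀) ≫ IsRegularMono.left m = (a₀ ≫ j₀) ≫ IsRegularMono.right m :=
    calc (a₀ ≫ j₀) ≫ IsRegularMono.left m = a₁ ≫ j₁ ≫ IsRegularMono.left m := by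
          rw [hsq, Category.assoc]
      _ = (a₀ ≫ j₀) ≫ IsRegularMono.right m := by
          rw [Category.assoc, sq.comp_eq_comp_of_comp_eq ha hcocone]
  refine ⟨IsRegularMono.lift m _ hequalizes, ?_, ?_⟩
  · rw [← cancel_mono j₀, Category.assoc, IsRegularMono.fac]
  · rw [← cancel_mono j₁, Category.assoc, ← hj, IsRegularMono.fac, hsq]

end CategoryTheory.IsPushout

theorem pushout_isPullback_of_coherently_embeddable_general
    {C : Type*} [Category C] [HasPushouts C] [IsRegularMonoCategory C]
    {H G₀ G₁ G : C} (ι₀ : H ⟶ G₀) (ι₁ : H ⟶ G₁) [Mono ι₀]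
    (j₀ : G₀ ⟶ G) (j₁ : G₁ ⟶ G) [Mono j₀] [Mono j₁]
    (hcomm : ι₀ ≫ j₀ = ι₁ ≫ j₁) :
    IsPullback ι₀ ι₁ (pushout.inl ι₀ ι₁) (pushout.inr ι₀ ι₁) := by
  have := IsRegularMonoCategory.regularMonoOfMono (ι₀ ≫ j₀)
  exact (IsPushout.of_hasPushout ι₀ ι₁).isPullback_of_isRegularMono_comp hcomm

/-- In a category with pushouts in which every monomorphism is regular, the pushout square
of a coherently-embeddable pair of monomorphisms is also a pullback square. -/
theorem pushout_isPullback_of_coherently_embeddable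
    {C : Type*} [Category C] [HasPushouts C] [IsRegularMonoCategory C]
    {H G₀ G₁ G : C} (ι₀ : H ⟶ G₀) (ι₁ : H ⟶ G₁) [Mono ι₀] [Mono ι₁]
    (j₀ : G₀ ⟶ G) (j₁ : G₁ ⟶ G) [Mono j₀] [Mono j₁]
    (hcomm : ι₀ ≫ j₀ = ι₁ ≫ j₁) :
    IsPullback ι₀ ι₁ (pushout.inl ι₀ ι₁) (pushout.inr ι₀ ι₁) :=
  pushout_isPullback_of_coherently_embeddable_general ι₀ ι₁ j₀ j₁ hcomm
end

section
/- Every algebraically sound family of embeddings ι_i : H → G_i (i ∈ I) of compact groups is coherently embeddable: there exist a compact group G and injective continuous homomorphisms j_i : G_i → G with all composites j_i ∘ ι_i equal. -/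
/-! Taking the product, over all `x ≠ 1` in `∐_H G i`, of the compact groups witnessing algebraic
soundness for `x` gives one compact group into which `∐_H G i` maps injectively; since the
structure maps `G i → ∐_H G i` are injective, their composites with this map are the required
embeddings. -/

universe u v w

/-- A bundled compact (Hausdorff) topological group. -/
structure CompactGroup : Type (u + 1) where
  carrier : Type u
  [grp : Group carrier]
  [top : TopologicalSpace carrier]
  [tgrp : IsTopologicalGroup carrier]
  [cpt : CompactSpace carrier]
  [t2 : T2Space carrier]

attribute [instance] CompactGroup.grp CompactGroup.top CompactGroup.tgrp
  CompactGroup.cpt CompactGroup.t2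

instance : CoeSort CompactGroup.{u} (Type u) := ⟨CompactGroup.carrier⟩

/-- A family of embeddings `φ i : H → G i` of compact groups is *algebraically sound* if the
group-theoretic amalgamated free product `∐_H G i` (Mathlib's `Monoid.PushoutI`) embeds into
its Bohr compactification: every `x ≠ 1` in `∐_H G i` is sent to a non-identity element by
the homomorphism induced by some family of continuous homomorphisms `f i : G i → K` into a
compact group `K`, all agreeing on `H`. -/
def AlgebraicallySound {ι : Type u} {H : Type v} [Group H] [TopologicalSpace H]
    {G : ι → Type w} [∀ i, Group (G i)] [∀ i, TopologicalSpace (G i)]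
    (φ : ∀ i, H →* G i) : Prop :=
  ∀ x : Monoid.PushoutI φ, x ≠ 1 →
    ∃ (K : CompactGroup.{max u v w}) (f : ∀ i, G i →* K) (k : H →* K)
      (hf : ∀ i, (f i).comp (φ i) = k),
      (∀ i, Continuous (f i)) ∧ Monoid.PushoutI.lift f k hf x ≠ 1

/-- A family of embeddings `φ i : H → G i` of compact groups is *coherently embeddable* if
there are injective continuous homomorphisms `j i : G i → K` into a single compact group `K`
whose composites with the `φ i` all agree. -/
def CoherentlyEmbeddable {ι : Type u} {H : Type v} [Group H] [TopologicalSpace H]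
    {G : ι → Type w} [∀ i, Group (G i)] [∀ i, TopologicalSpace (G i)]
    (φ : ∀ i, H →* G i) : Prop :=
  ∃ (K : CompactGroup.{max u v w}) (j : ∀ i, G i →* K) (k : H →* K),
    (∀ i, Continuous (j i)) ∧ (∀ i, Function.Injective (j i)) ∧
    ∀ i, (j i).comp (φ i) = k

namespace CompactGroup

def pi {α : Type u} (K : α → CompactGroup.{u}) : CompactGroup.{u} := ⟨∀ a, K a⟩

end CompactGroup

theorem MonoidHom.pi_injective_of_forall_ne_one {α M : Type*} {N : α → Type*}
    [Group M] [∀ a, Group (N a)] (g : ∀ a, M →* N a) (hg : ∀ x ≠ 1, ∃ a, g a x ≠ 1) :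
    Function.Injective (MonoidHom.pi g) := by
  refine (injective_iff_map_eq_one _).2 fun x hx => ?_
  by_contra hx1
  obtain ⟨a, ha⟩ := hg x hx1
  exact ha (congrFun hx a)

namespace Monoid.PushoutI

theorem lift_pi {ι α : Type*} {H : Type*} {G : ι → Type*} {K : α → Type*} [Monoid H]
    [∀ i, Monoid (G i)] [∀ a, Monoid (K a)] {φ : ∀ i, H →* G i}
    (f : ∀ a i, G i →* K a) (k : ∀ a, H →* K a) (hf : ∀ a i, (f a i).comp (φ i) = k a)
    (hpi : ∀ i, (MonoidHom.pi fun a => f a i).comp (φ i) = MonoidHom.pi k) :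
    lift (fun i => MonoidHom.pi fun a => f a i) (MonoidHom.pi k) hpi =
      MonoidHom.pi fun a => lift (f a) (k a) (hf a) := by
  ext <;> simp

end Monoid.PushoutI

theorem AlgebraicallySound.exists_injective_lift {ι : Type u} {H : Type v} [Group H]
    [TopologicalSpace H] {G : ι → Type w} [∀ i, Group (G i)] [∀ i, TopologicalSpace (G i)]
    {φ : ∀ i, H →* G i} (hsound : AlgebraicallySound φ) :
    ∃ (K : CompactGroup.{max u v w}) (f : ∀ i, G i →* K) (k : H →* K)
      (hf : ∀ i, (f i).comp (φ i) = k),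
      (∀ i, Continuous (f i)) ∧ Function.Injective (Monoid.PushoutI.lift f k hf) := by
  choose K f k hf hcont hne using fun x : {x : Monoid.PushoutI φ // x ≠ 1} => hsound x.1 x.2
  have hpi : ∀ i, (MonoidHom.pi fun x => f x i).comp (φ i) = MonoidHom.pi k := fun i => by
    ext h x
    exact DFunLike.congr_fun (hf x i) h
  have hlift : Function.Injective (Monoid.PushoutI.lift _ _ hpi) := by
    rw [Monoid.PushoutI.lift_pi f k hf]
    exact MonoidHom.pi_injective_of_forall_ne_one _ fun x hx => ⟨⟨x, hx⟩, hne ⟨x, hx⟩⟩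
  exact ⟨CompactGroup.pi K, _, _, hpi, fun i => continuous_pi fun x => hcont x i, hlift⟩

theorem coherentlyEmbeddable_of_algebraicallySound_general
    {ι : Type u} {H : Type v}
    [Group H] [TopologicalSpace H]
    {G : ι → Type w} [∀ i, Group (G i)] [∀ i, TopologicalSpace (G i)]
    (φ : ∀ i, H →* G i)
    (hinj : ∀ i, Function.Injective (φ i))
    (hsound : AlgebraicallySound φ) :
    CoherentlyEmbeddable φ := by
  obtain ⟨K, f, k, hf, hcont, hlift⟩ := hsound.exists_injective_lift
  have hof : ∀ i, ⇑(f i) = Monoid.PushoutI.lift f k hf ∘ Monoid.PushoutI.of i := fun i =>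
    funext fun g => (Monoid.PushoutI.lift_of f k hf g).symm
  refine ⟨K, f, k, hcont, fun i => ?_, hf⟩
  rw [hof i]
  exact hlift.comp (Monoid.PushoutI.of_injective hinj i)

/-- An algebraically sound family of embeddings of compact groups is coherently embeddable. -/
theorem coherentlyEmbeddable_of_algebraicallySound
    {ι : Type u} {H : Type v}
    [Group H] [TopologicalSpace H] [IsTopologicalGroup H] [CompactSpace H] [T2Space H]
    {G : ι → Type w} [∀ i, Group (G i)] [∀ i, TopologicalSpace (G i)]
    [∀ i, IsTopologicalGroup (G i)] [∀ i, CompactSpace (G i)] [∀ i, T2Space (G i)]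
    (φ : ∀ i, H →* G i)
    (hinj : ∀ i, Function.Injective (φ i)) (hcont : ∀ i, Continuous (φ i))
    (hsound : AlgebraicallySound φ) :
    CoherentlyEmbeddable φ :=
  coherentlyEmbeddable_of_algebraicallySound_general φ hinj hsound
end

section
/- Let ι_i : H → G_i (i ∈ I) be an algebraically sound family of embeddings of compact groups. Then for every subset J ⊆ I, the subfamily ι_j : H → G_j (j ∈ J) is also algebraically sound. -/
universe u v w

/-!
The canonical map `∐_H G j (j ∈ J) → ∐_H G i` is injective: restricting a transversal of `H` in
each `G i` to the indices in `J`, a normal word over `J` is literally a normal word over the whole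
family, and normal forms are unique. So continuous maps into a compact group that separate the
image of `x ≠ 1` in the big amalgam separate `x` once restricted to `J`.
-/

namespace Monoid

namespace CoprodI.Word

variable {ι κ : Type*} {M : ι → Type*} [∀ i, Monoid (M i)] {e : κ → ι}

def reindex (he : Function.Injective e) (w : Word fun k => M (e k)) : Word M where
  toList := w.toList.map (Sigma.map e fun _ => id)
  ne_one := by
    simp only [List.mem_map]
    rintro _ ⟨l, hl, rfl⟩
    exact w.ne_one l hl
  chain_ne := (List.isChain_map _).2 <| w.chain_ne.imp fun _ _ => he.ne

theorem reindex_toList (he : Function.Injective e) (w : Word fun k => M (e k)) :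
    (w.reindex he).toList = w.toList.map (Sigma.map e fun _ => id) :=
  rfl

end CoprodI.Word

namespace PushoutI

variable {ι κ H : Type*} {G : ι → Type*} [Group H] [∀ i, Group (G i)]

variable (φ : ∀ i, H →* G i) (e : κ → ι)

def comapIndex : PushoutI (fun k => φ (e k)) →* PushoutI φ :=
  lift (fun k => of (e k)) (base φ) fun k => of_comp_eq_base (e k)

variable {φ e}

@[simp]
theorem comapIndex_of (k : κ) (g : G (e k)) : comapIndex φ e (of k g) = of (e k) g :=
  lift_of _ _ _ _

@[simp]
theorem comapIndex_base (h : H) : comapIndex φ e (base _ h) = base φ h :=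
  lift_base _ _ _ _

theorem lift_comp_comapIndex {K : Type*} [Monoid K] (f : ∀ i, G i →* K) (k : H →* K)
    (hf : ∀ i, (f i).comp (φ i) = k) :
    (lift f k hf).comp (comapIndex φ e) = lift (fun j => f (e j)) k fun j => hf (e j) := by
  refine hom_ext (fun j => ?_) ?_ <;> ext <;> simp

theorem comapIndex_ofCoprodI_prod (he : Function.Injective e)
    (w : CoprodI.Word fun k => G (e k)) :
    comapIndex φ e (ofCoprodI w.prod) = ofCoprodI (w.reindex he).prod := by
  simp only [CoprodI.Word.prod, CoprodI.Word.reindex_toList, map_list_prod, List.map_map]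
  refine congrArg List.prod <| List.map_congr_left fun ⟨k, g⟩ _ => ?_
  simp only [Function.comp_apply, Sigma.map, id]
  exact (comapIndex_of k g).trans (ofCoprodI_of _ _).symm

namespace NormalWord

def Transversal.comap (d : Transversal φ) (e : κ → ι) : Transversal fun k => φ (e k) where
  injective k := d.injective (e k)
  set k := d.set (e k)
  one_mem k := d.one_mem (e k)
  compl k := d.compl (e k)

variable {d : Transversal φ}

def reindex (he : Function.Injective e) (w : NormalWord (d.comap e)) : NormalWord d where
  toWord := w.toWord.reindex he
  head := w.head
  normalized := by
    intro i g hg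
    obtain ⟨⟨k, g'⟩, hl, hk⟩ := List.mem_map.1 hg
    cases hk
    exact w.normalized k g' hl

theorem reindex_injective (he : Function.Injective e) :
    Function.Injective (reindex (d := d) he) := fun _ _ h =>
  NormalWord.ext (congrArg (·.head) h) <|
    List.map_injective_iff.2 (he.sigma_map fun _ => Function.injective_id)
      (congrArg (fun w => w.toList) h)

theorem prod_reindex (he : Function.Injective e) (w : NormalWord (d.comap e)) :
    (reindex he w).prod = comapIndex φ e w.prod := by
  simp only [prod, map_mul, comapIndex_base, comapIndex_ofCoprodI_prod he]
  rfl

end NormalWord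

theorem comapIndex_injective (hφ : ∀ i, Function.Injective (φ i)) (he : Function.Injective e) :
    Function.Injective (comapIndex φ e) := by
  classical
  obtain ⟨d⟩ := NormalWord.transversal_nonempty φ hφ
  intro x y hxy
  obtain ⟨w, rfl⟩ := (NormalWord.equiv (d := d.comap e)).symm.surjective x
  obtain ⟨w', rfl⟩ := (NormalWord.equiv (d := d.comap e)).symm.surjective y
  change comapIndex φ e w.prod = comapIndex φ e w'.prod at hxy
  rw [← NormalWord.prod_reindex he, ← NormalWord.prod_reindex he] at hxy
  exact congrArg _ (NormalWord.reindex_injective he (NormalWord.prod_injective hxy))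

end PushoutI

end Monoid

theorem AlgebraicallySound.comp_injective {ι κ : Type u} {H : Type v} [Group H]
    [TopologicalSpace H] {G : ι → Type w} [∀ i, Group (G i)] [∀ i, TopologicalSpace (G i)]
    {φ : ∀ i, H →* G i} (hsound : AlgebraicallySound φ) (hφ : ∀ i, Function.Injective (φ i))
    {e : κ → ι} (he : Function.Injective e) :
    AlgebraicallySound fun k => φ (e k) := by
  intro x hx
  obtain ⟨K, f, k, hf, hcont, hne⟩ :=
    hsound _ ((map_ne_one_iff _ (Monoid.PushoutI.comapIndex_injective hφ he)).2 hx)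
  refine ⟨K, fun j => f (e j), k, fun j => hf (e j), fun j => hcont (e j), ?_⟩
  rwa [← Monoid.PushoutI.lift_comp_comapIndex]

theorem algebraicallySound_subfamily_general
    {ι : Type u} {H : Type v}
    [Group H] [TopologicalSpace H]
    {G : ι → Type w} [∀ i, Group (G i)] [∀ i, TopologicalSpace (G i)]
    (φ : ∀ i, H →* G i)
    (hinj : ∀ i, Function.Injective (φ i))
    (hsound : AlgebraicallySound φ)
    (J : Set ι) :
    AlgebraicallySound (fun j : J => φ j) :=
  hsound.comp_injective hinj Subtype.val_injective

/-- Every subfamily of an algebraically sound family of embeddings of compact groups is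
algebraically sound. -/
theorem algebraicallySound_subfamily
    {ι : Type u} {H : Type v}
    [Group H] [TopologicalSpace H] [IsTopologicalGroup H] [CompactSpace H] [T2Space H]
    {G : ι → Type w} [∀ i, Group (G i)] [∀ i, TopologicalSpace (G i)]
    [∀ i, IsTopologicalGroup (G i)] [∀ i, CompactSpace (G i)] [∀ i, T2Space (G i)]
    (φ : ∀ i, H →* G i)
    (hinj : ∀ i, Function.Injective (φ i)) (hcont : ∀ i, Continuous (φ i))
    (hsound : AlgebraicallySound φ)
    (J : Set ι) :
    AlgebraicallySound (fun j : J => φ j) :=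
  algebraicallySound_subfamily_general φ hinj hsound J
end

section
/- Let ι_i : H → G_i (i ∈ I) be a family of embeddings of compact groups, and let D be a collection of subsets of I that is directed under inclusion and covers I (so every finite subset of I is contained in some J ∈ D). Suppose that: (i) for each J ∈ D the subfamily (ι_j)_{j∈J} is algebraically sound; and (ii) for each J ∈ D there exist a function r : I → J with r(j) = j for all j ∈ J and continuous homomorphisms t_i : G_i → G_{r(i)} with t_i ∘ ι_i = ι_{r(i)} for all i ∈ I and t_j = id_{G_j} for all j ∈ J (so that the induced homomorphism ∐_{H,I} G_i → ∐_{H,J} G_j splits the canonical map ∐_{H,J} G_j → ∐_{H,I} G_i). Then the whole family (ι_i)_{i∈I} is algebraically sound. -/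
universe u v w

/-!
Every element of `∐_{H,I} G i` is a finite word, so it already lies in the image of
`∐_{H,J} G j` for some `J ∈ D`. If it is nontrivial there, soundness of `J` separates it by
continuous maps `f j : G j → K`; precomposing with the splitting, `f (r i) ∘ t i`, extends
these to the whole family, and the induced map on `∐_{H,I} G i` restricts to the old one on
the image of `∐_{H,J} G j`.
-/

theorem MonoidHom.comp_eq_of_heq_id {ι K : Type*} [Monoid K] {G : ι → Type*}
    [∀ i, Monoid (G i)] (f : ∀ i, G i →* K) {a b : ι} (h : a = b) (t : G b →* G a)
    (ht : HEq t (MonoidHom.id (G b))) : (f a).comp t = f b := by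
  subst h
  rw [eq_of_heq ht, MonoidHom.comp_id]

namespace Monoid.PushoutI

variable {ι κ μ H K : Type*} {G : ι → Type*} [Monoid H] [∀ i, Monoid (G i)] [Monoid K]
  (φ : ∀ i, H →* G i)

def reindex (e : κ → ι) : PushoutI (fun k => φ (e k)) →* PushoutI φ :=
  lift (fun k => of (e k)) (base φ) fun k => of_comp_eq_base (e k)

@[simp]
theorem reindex_of (e : κ → ι) (k : κ) (g : G (e k)) : reindex φ e (of k g) = of (e k) g :=
  lift_of ..

@[simp]
theorem reindex_base (e : κ → ι) (h : H) : reindex φ e (base _ h) = base φ h :=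
  lift_base ..

theorem lift_comp_reindex (f : ∀ i, G i →* K) (k : H →* K)
    (hf : ∀ i, (f i).comp (φ i) = k) (e : κ → ι) :
    (lift f k hf).comp (reindex φ e) = lift (fun j => f (e j)) k fun j => hf (e j) := by
  ext <;> simp

theorem reindex_comp_reindex (e : κ → ι) (e' : μ → κ) :
    (reindex φ e).comp (reindex (fun k => φ (e k)) e') = reindex φ (e ∘ e') :=
  lift_comp_reindex ..

theorem mrange_reindex_comp_le (e : κ → ι) (e' : μ → κ) :
    MonoidHom.mrange (reindex φ (e ∘ e')) ≤ MonoidHom.mrange (reindex φ e) := by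
  rintro _ ⟨y, rfl⟩
  exact ⟨reindex _ e' y, by rw [← reindex_comp_reindex]; rfl⟩

theorem exists_mem_mrange_reindex_of_directedOn {D : Set (Set ι)} (hD : D.Nonempty)
    (hdir : DirectedOn (· ⊆ ·) D) (hcover : ∀ i, ∃ J ∈ D, i ∈ J) (x : PushoutI φ) :
    ∃ J ∈ D, x ∈ MonoidHom.mrange (reindex φ ((↑) : J → ι)) := by
  induction x using induction_on with
  | of i g =>
    obtain ⟨J, hJ, hi⟩ := hcover i
    exact ⟨J, hJ, of (φ := fun j : J => φ j) ⟨i, hi⟩ g, reindex_of ..⟩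
  | base h =>
    obtain ⟨J, hJ⟩ := hD
    exact ⟨J, hJ, base _ h, reindex_base ..⟩
  | mul x y hx hy =>
    obtain ⟨J₁, hJ₁, hx⟩ := hx
    obtain ⟨J₂, hJ₂, hy⟩ := hy
    obtain ⟨J, hJ, h₁, h₂⟩ := hdir J₁ hJ₁ J₂ hJ₂
    refine ⟨J, hJ, mul_mem ?_ ?_⟩
    · exact mrange_reindex_comp_le φ _ (Set.inclusion h₁) hx
    · exact mrange_reindex_comp_le φ _ (Set.inclusion h₂) hy

section Retraction

variable {J : Set ι} {r : ι → ι} (hr : ∀ i, r i ∈ J) (t : ∀ i, G i →* G (r i))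

def compRetraction (f : ∀ j : J, G j →* K) (i : ι) : G i →* K :=
  (f ⟨r i, hr i⟩).comp (t i)

variable {φ}

theorem compRetraction_comp_eq (ht : ∀ i, (t i).comp (φ i) = φ (r i))
    {f : ∀ j : J, G j →* K} {k : H →* K} (hf : ∀ j, (f j).comp (φ j) = k) (i : ι) :
    (compRetraction hr t f i).comp (φ i) = k := by
  rw [compRetraction, MonoidHom.comp_assoc, ht i]
  exact hf ⟨r i, hr i⟩

theorem compRetraction_subtype (hrJ : ∀ j ∈ J, r j = j)
    (htid : ∀ j ∈ J, HEq (t j) (MonoidHom.id (G j))) (f : ∀ j : J, G j →* K) (j : J) :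
    compRetraction hr t f j = f j :=
  MonoidHom.comp_eq_of_heq_id (G := fun j : J => G j) f (Subtype.ext (hrJ j j.2)) _
    (htid j j.2)

theorem lift_compRetraction_comp_reindex (ht : ∀ i, (t i).comp (φ i) = φ (r i))
    (hrJ : ∀ j ∈ J, r j = j) (htid : ∀ j ∈ J, HEq (t j) (MonoidHom.id (G j)))
    {f : ∀ j : J, G j →* K} {k : H →* K} (hf : ∀ j, (f j).comp (φ j) = k) :
    (lift (compRetraction hr t f) k (compRetraction_comp_eq hr t ht hf)).comp
      (reindex φ ((↑) : J → ι)) = lift f k hf := by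
  rw [lift_comp_reindex]
  ext j g <;> simp [compRetraction_subtype hr t hrJ htid]

end Retraction

end Monoid.PushoutI

open Monoid.PushoutI in
theorem algebraicallySound_of_directed_union_of_split_sound_subfamilies_general
    {ι : Type u} {H : Type v}
    [Group H] [TopologicalSpace H]
    {G : ι → Type w} [∀ i, Group (G i)] [∀ i, TopologicalSpace (G i)]
    (φ : ∀ i, H →* G i)
    (D : Set (Set ι))
    (hdir : ∀ J₁ ∈ D, ∀ J₂ ∈ D, ∃ J ∈ D, J₁ ⊆ J ∧ J₂ ⊆ J)
    (hcover : ∀ s : Finset ι, ∃ J ∈ D, ↑s ⊆ J)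
    (hsound : ∀ J ∈ D, AlgebraicallySound (fun j : J => φ j))
    (hsplit : ∀ J ∈ D, ∃ r : ι → ι,
      (∀ i, r i ∈ J) ∧ (∀ j ∈ J, r j = j) ∧
      ∃ t : ∀ i, G i →* G (r i),
        (∀ i, Continuous (t i)) ∧
        (∀ i, (t i).comp (φ i) = φ (r i)) ∧
        ∀ j ∈ J, HEq (t j) (MonoidHom.id (G j))) :
    AlgebraicallySound φ := by
  intro x hx
  have hD : D.Nonempty := (hcover ∅).imp fun _ hJ => hJ.1
  have hmem : ∀ i, ∃ J ∈ D, i ∈ J :=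
    fun i => (hcover {i}).imp fun _ ⟨hJ, hs⟩ => ⟨hJ, hs (by simp)⟩
  obtain ⟨J, hJ, y, rfl⟩ := exists_mem_mrange_reindex_of_directedOn φ hD hdir hmem x
  obtain ⟨K, f, k, hf, hfc, hne⟩ := hsound J hJ y (by rintro rfl; exact hx (map_one _))
  obtain ⟨r, hr, hrJ, t, htc, ht, htid⟩ := hsplit J hJ
  refine ⟨K, compRetraction hr t f, k, compRetraction_comp_eq hr t ht hf,
    fun i => (hfc _).comp (htc i), ?_⟩
  rwa [← lift_compRetraction_comp_reindex hr t ht hrJ htid hf] at hne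

/-- If a family of embeddings of compact groups is the filtered union of algebraically sound
subfamilies, and for each such subfamily `J` the canonical map of group-theoretic amalgamated
free products `∐_{H,J} G j → ∐_{H,I} G i` splits (via a retraction `r : I → J` fixing `J` and
compatible continuous homomorphisms `t i : G i → G (r i)` over `H` restricting to the identity
on the members of `J`), then the whole family is algebraically sound. -/
theorem algebraicallySound_of_directed_union_of_split_sound_subfamilies
    {ι : Type u} {H : Type v}
    [Group H] [TopologicalSpace H] [IsTopologicalGroup H] [CompactSpace H] [T2Space H]
    {G : ι → Type w} [∀ i, Group (G i)] [∀ i, TopologicalSpace (G i)]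
    [∀ i, IsTopologicalGroup (G i)] [∀ i, CompactSpace (G i)] [∀ i, T2Space (G i)]
    (φ : ∀ i, H →* G i)
    (hinj : ∀ i, Function.Injective (φ i)) (hcont : ∀ i, Continuous (φ i))
    (D : Set (Set ι))
    (hdir : ∀ J₁ ∈ D, ∀ J₂ ∈ D, ∃ J ∈ D, J₁ ⊆ J ∧ J₂ ⊆ J)
    (hcover : ∀ s : Finset ι, ∃ J ∈ D, ↑s ⊆ J)
    (hsound : ∀ J ∈ D, AlgebraicallySound (fun j : J => φ j))
    (hsplit : ∀ J ∈ D, ∃ r : ι → ι,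
      (∀ i, r i ∈ J) ∧ (∀ j ∈ J, r j = j) ∧
      ∃ t : ∀ i, G i →* G (r i),
        (∀ i, Continuous (t i)) ∧
        (∀ i, (t i).comp (φ i) = φ (r i)) ∧
        ∀ j ∈ J, HEq (t j) (MonoidHom.id (G j))) :
    AlgebraicallySound φ :=
  algebraicallySound_of_directed_union_of_split_sound_subfamilies_general φ D hdir hcover hsound
    hsplit
end
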